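/- Let T, ν, ε, v > 0, s ∈ ℝ, and let η₀ be the unique positive root of g(η) := ε²ν²η² + (ν²v − 4ε²T)η − 4(T+1)v. Then for every real ξ with ξ² > η₀, every complex root λ of the quadratic λ² − (2siξ − (ν/v)ξ²)λ − s²ξ² − (ν/v)siξ³ + ((T+1)/v²)ξ² − ε²ξ⁴/(ε²v²ξ² + v³) = 0 satisfies Re λ < −T/(νv). -/

import Mathlib

/-!
The substitution `μ = λ - i s ξ` turns the dispersion relation into the real quadratic
`μ² + b μ + c = 0` with `b = ν ξ² / v` and `c = (T + 1) ξ² / v² - ε² ξ⁴ / (ε² v² ξ² + v³)`.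
Its roots are either complex conjugate, with real part `-b / 2`, or real; in both cases they lie
to the left of any `m > -b / 2` at which the quadratic is positive. For `m = -T / (ν v)`
positivity holds for every `ξ ≠ 0`, while `m > -b / 2` amounts to `ν² ξ² > 2 T`, which follows
from `ξ² > η₀` because `g < 0` on `(0, 2 T / ν²]`.
-/

open Complex

theorem re_lt_of_sq_add_mul_add_eq_zero {b c m : ℝ} {μ : ℂ}
    (hμ : μ ^ 2 + b * μ + c = 0) (hvertex : -b / 2 < m) (hm : 0 < m ^ 2 + b * m + c) :
    μ.re < m := by
  have hre : μ.re ^ 2 - μ.im ^ 2 + b * μ.re + c = 0 := by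
    simpa [sq] using congrArg re hμ
  have him : μ.im * (2 * μ.re + b) = 0 := by
    have := congrArg im hμ
    simp only [sq, add_im, mul_im, ofReal_re, ofReal_im, zero_mul, add_zero, zero_im] at this
    linear_combination this
  rcases mul_eq_zero.mp him with hreal | hcentre
  · by_contra! hle
    rw [hreal] at hre
    -- the quadratic is increasing to the right of its vertex `-b / 2`
    nlinarith [mul_nonneg (sub_nonneg.2 hle) (by linarith : 0 ≤ μ.re + m + b)]
  · linarith

noncomputable def dispersionPoly (T ν ε v s ξ : ℝ) (l : ℂ) : ℂ :=
  l ^ 2 - (2 * (s : ℂ) * Complex.I * (ξ : ℂ) - ((ν : ℂ) / (v : ℂ)) * (ξ : ℂ) ^ 2) * l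
    - (s : ℂ) ^ 2 * (ξ : ℂ) ^ 2 - ((ν : ℂ) / (v : ℂ)) * (s : ℂ) * Complex.I * (ξ : ℂ) ^ 3
    + (((T : ℂ) + 1) / (v : ℂ) ^ 2) * (ξ : ℂ) ^ 2
    - (ε : ℂ) ^ 2 * (ξ : ℂ) ^ 4 / ((ε : ℂ) ^ 2 * (v : ℂ) ^ 2 * (ξ : ℂ) ^ 2 + (v : ℂ) ^ 3)

theorem dispersionPoly_eq_shift (T ν ε v s ξ : ℝ) (l : ℂ) :
    dispersionPoly T ν ε v s ξ l = (l - s * ξ * I) ^ 2 + ((ν * ξ ^ 2 / v : ℝ) : ℂ) * (l - s * ξ * I)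
      + (((T + 1) * ξ ^ 2 / v ^ 2 - ε ^ 2 * ξ ^ 4 / (ε ^ 2 * v ^ 2 * ξ ^ 2 + v ^ 3) : ℝ) : ℂ) := by
  unfold dispersionPoly
  push_cast
  linear_combination (-(s : ℂ) ^ 2 * ξ ^ 2) * I_sq

theorem shiftedDispersion_pos {T ν ε v ξ : ℝ} (hν : 0 < ν) (hv : 0 < v) (hξ : ξ ≠ 0) :
    0 < (-T / (ν * v)) ^ 2 + ν * ξ ^ 2 / v * (-T / (ν * v))
      + ((T + 1) * ξ ^ 2 / v ^ 2 - ε ^ 2 * ξ ^ 4 / (ε ^ 2 * v ^ 2 * ξ ^ 2 + v ^ 3)) := by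
  have hD : 0 < ε ^ 2 * ξ ^ 2 + v := by positivity
  -- the Debye term only cancels part of the pressure term `ξ² / v²`
  have h : (-T / (ν * v)) ^ 2 + ν * ξ ^ 2 / v * (-T / (ν * v))
      + ((T + 1) * ξ ^ 2 / v ^ 2 - ε ^ 2 * ξ ^ 4 / (ε ^ 2 * v ^ 2 * ξ ^ 2 + v ^ 3))
      = T ^ 2 / (ν * v) ^ 2 + ξ ^ 2 / (v * (ε ^ 2 * ξ ^ 2 + v)) := by
    have : ε ^ 2 * v ^ 2 * ξ ^ 2 + v ^ 3 = v ^ 2 * (ε ^ 2 * ξ ^ 2 + v) := by ring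
    rw [this]
    field_simp
    ring
  rw [h]
  positivity

theorem two_mul_le_of_threshold_root {T ν ε v η : ℝ} (hv : 0 < v) (hη : 0 < η)
    (hroot : ε ^ 2 * ν ^ 2 * η ^ 2 + (ν ^ 2 * v - 4 * ε ^ 2 * T) * η - 4 * (T + 1) * v = 0) :
    2 * T ≤ ν ^ 2 * η := by
  by_contra! h
  have hneg : ν ^ 2 * η - 4 * T < 0 := by nlinarith [mul_nonneg (sq_nonneg ν) hη.le]
  have hsplit : ε ^ 2 * η * (ν ^ 2 * η - 4 * T) + v * (ν ^ 2 * η - 4 * T - 4) = 0 := by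
    linear_combination hroot
  linarith [mul_nonpos_of_nonneg_of_nonpos (by positivity : 0 ≤ ε ^ 2 * η) hneg.le,
    mul_neg_of_pos_of_neg hv (by linarith : ν ^ 2 * η - 4 * T - 4 < 0)]

theorem dispersionPoly_root_re_lt {T ν ε v s ξ : ℝ} {l : ℂ} (hν : 0 < ν) (hv : 0 < v)
    (hξ : ξ ≠ 0) (hT : 2 * T < ν ^ 2 * ξ ^ 2) (hl : dispersionPoly T ν ε v s ξ l = 0) :
    l.re < -T / (ν * v) := by
  rw [dispersionPoly_eq_shift] at hl
  have hvertex : -(ν * ξ ^ 2 / v) / 2 < -T / (ν * v) := by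
    rw [div_lt_div_iff₀ two_pos (by positivity)]
    field_simp
    nlinarith
  simpa using re_lt_of_sq_add_mul_add_eq_zero hl hvertex (shiftedDispersion_pos hν hv hξ)

theorem stmt6_general (T ν ε v s : ℝ)
    (hν : 0 < ν) (hv : 0 < v)
    (g : ℝ → ℝ)
    (hg : ∀ η : ℝ, g η = ε ^ 2 * ν ^ 2 * η ^ 2 + (ν ^ 2 * v - 4 * ε ^ 2 * T) * η
      - 4 * (T + 1) * v)
    (η₀ : ℝ) (hη₀pos : 0 < η₀) (hη₀root : g η₀ = 0) :
    ∀ (ξ : ℝ) (l : ℂ), η₀ < ξ ^ 2 →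
      l ^ 2 - (2 * (s : ℂ) * Complex.I * (ξ : ℂ) - ((ν : ℂ) / (v : ℂ)) * (ξ : ℂ) ^ 2) * l
          - (s : ℂ) ^ 2 * (ξ : ℂ) ^ 2 - ((ν : ℂ) / (v : ℂ)) * (s : ℂ) * Complex.I * (ξ : ℂ) ^ 3
          + (((T : ℂ) + 1) / (v : ℂ) ^ 2) * (ξ : ℂ) ^ 2
          - (ε : ℂ) ^ 2 * (ξ : ℂ) ^ 4 / ((ε : ℂ) ^ 2 * (v : ℂ) ^ 2 * (ξ : ℂ) ^ 2 + (v : ℂ) ^ 3)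
        = 0 →
      l.re < -T / (ν * v) := by
  intro ξ l hξ hl
  have hξ0 : ξ ≠ 0 := by
    rintro rfl
    linarith [zero_pow two_ne_zero (M₀ := ℝ)]
  have hη₀ : 2 * T ≤ ν ^ 2 * η₀ := two_mul_le_of_threshold_root hv hη₀pos (hg η₀ ▸ hη₀root)
  exact dispersionPoly_root_re_lt hν hv hξ0 (hη₀.trans_lt (by gcongr)) hl

/-- **Uniform strict bound on dispersion roots in the outer frequency range.**
For `T, ν, ε, v > 0`, `s ∈ ℝ`, and `η₀` the unique positive root of
`g(η) = ε²ν²η² + (ν²v - 4ε²T)η - 4(T+1)v`, every complex root `λ` of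
`λ² - (2siξ - (ν/v)ξ²)λ - s²ξ² - (ν/v)siξ³ + ((T+1)/v²)ξ² - ε²ξ⁴/(ε²v²ξ² + v³) = 0`
with `ξ² > η₀` satisfies `Re λ < -T/(νv)`. -/
theorem stmt6 (T ν ε v s : ℝ)
    (hT : 0 < T) (hν : 0 < ν) (hε : 0 < ε) (hv : 0 < v)
    (g : ℝ → ℝ)
    (hg : ∀ η : ℝ, g η = ε ^ 2 * ν ^ 2 * η ^ 2 + (ν ^ 2 * v - 4 * ε ^ 2 * T) * η
      - 4 * (T + 1) * v)
    (η₀ : ℝ) (hη₀pos : 0 < η₀) (hη₀root : g η₀ = 0)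
    (hη₀uniq : ∀ η : ℝ, 0 < η → g η = 0 → η = η₀) :
    ∀ (ξ : ℝ) (l : ℂ), η₀ < ξ ^ 2 →
      l ^ 2 - (2 * (s : ℂ) * Complex.I * (ξ : ℂ) - ((ν : ℂ) / (v : ℂ)) * (ξ : ℂ) ^ 2) * l
          - (s : ℂ) ^ 2 * (ξ : ℂ) ^ 2 - ((ν : ℂ) / (v : ℂ)) * (s : ℂ) * Complex.I * (ξ : ℂ) ^ 3
          + (((T : ℂ) + 1) / (v : ℂ) ^ 2) * (ξ : ℂ) ^ 2
          - (ε : ℂ) ^ 2 * (ξ : ℂ) ^ 4 / ((ε : ℂ) ^ 2 * (v : ℂ) ^ 2 * (ξ : ℂ) ^ 2 + (v : ℂ) ^ 3)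
        = 0 →
      l.re < -T / (ν * v) :=
  stmt6_general T ν ε v s hν hv g hg η₀ hη₀pos hη₀root
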